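/- arXiv:2308.03345 — 4 statements merged into one kernel-verified Lean document; each statement's English description precedes it below -/
import Mathlib

section
/- Let A be a unital C*-algebra equipped with a tracial state τ. Then for all unitary elements U and V of A, √2·Re(τ(star U * V)) − Im(τ(U − √2·V)) ≤ 2. -/
/-!
Put `a = U - √2 V` and `t = Re τ(a⋆a)`. Expanding with `U⋆U = V⋆V = 1` gives
`t = 3 - 2√2 Re τ(U⋆V)`, and positivity of `τ` with `τ 1 = 1` gives `(Im τ a)² ≤ |τ a|² ≤ t`.
So with `y = -Im τ a` the left-hand side is `(3 - t)/2 + y ≤ (3 - y²)/2 + y = 2 - (y - 1)²/2`.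
-/

open scoped ComplexOrder
open Complex ComplexConjugate

section PositiveFunctional

variable {A : Type*} [Ring A] [StarRing A] [Algebra ℂ A] [StarModule ℂ A] {τ : A →ₗ[ℂ] ℂ}

/-- Polarization: the imaginary parts of `τ` at `(1 + a)⋆(1 + a)` and `(1 + i a)⋆(1 + i a)`
vanish. -/
theorem map_star_eq_conj (hpos : ∀ a : A, 0 ≤ τ (star a * a)) (a : A) :
    τ (star a) = conj (τ a) := by
  have him (b : A) : (τ (star b * b)).im = 0 := (Complex.nonneg_iff.1 (hpos b)).2.symm
  have h1 : star (1 + a) * (1 + a) = 1 + a + star a + star a * a := by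
    simp only [star_add, star_one, add_mul, mul_add, one_mul, mul_one]
    abel
  have hI : star (1 + I • a) * (1 + I • a) = 1 + I • a - I • star a + star a * a := by
    simp only [star_add, star_one, star_smul, add_mul, mul_add, one_mul, mul_one,
      smul_mul_assoc, mul_smul_comm, Complex.star_def, conj_I]
    match_scalars <;> simp
  have e1 := him (1 + a)
  have eI := him (1 + I • a)
  have e0 := him 1
  rw [h1] at e1
  rw [hI] at eI
  rw [star_one, one_mul] at e0
  simp only [map_add, map_sub, map_smul, smul_eq_mul, add_im, sub_im, mul_im, I_re, I_im,
    him a, e0] at e1 eI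
  apply Complex.ext <;> simp only [conj_re, conj_im] <;> linarith

theorem sq_norm_map_le (hpos : ∀ a : A, 0 ≤ τ (star a * a)) (h1 : τ 1 = 1) (a : A) :
    ‖τ a‖ ^ 2 ≤ (τ (star a * a)).re := by
  set c := τ a
  have h := (Complex.nonneg_iff.1 (hpos (c • 1 - a))).1
  have e : star (c • 1 - a) * (c • 1 - a)
      = (conj c * c) • 1 - conj c • a - c • star a + star a * a := by
    simp only [star_sub, star_smul, star_one, sub_mul, mul_sub, smul_mul_assoc, mul_smul_comm,
      one_mul, mul_one, Complex.star_def]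
    module
  rw [e] at h
  simp only [map_add, map_sub, map_smul, smul_eq_mul, h1, mul_one, map_star_eq_conj hpos a] at h
  rw [← Complex.normSq_eq_norm_sq]
  simp only [add_re, sub_re, mul_re, conj_re, conj_im, normSq_apply] at h ⊢
  linarith

theorem re_map_star_mul_self_sub_real_smul (hpos : ∀ a : A, 0 ≤ τ (star a * a)) (h1 : τ 1 = 1)
    {U V : A} (hU : U ∈ unitary A) (hV : V ∈ unitary A) (r : ℝ) :
    (τ (star (U - (r : ℂ) • V) * (U - (r : ℂ) • V))).re
      = 1 + r ^ 2 - 2 * r * (τ (star U * V)).re := by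
  have e : star (U - (r : ℂ) • V) * (U - (r : ℂ) • V)
      = star U * U - (r : ℂ) • (star U * V) - (r : ℂ) • star (star U * V)
        + ((r : ℂ) * r) • (star V * V) := by
    simp only [star_sub, star_smul, star_mul, star_star, sub_mul, mul_sub, smul_mul_assoc,
      mul_smul_comm, Complex.star_def, conj_ofReal]
    module
  rw [e, Unitary.star_mul_self_of_mem hU, Unitary.star_mul_self_of_mem hV]
  simp only [map_add, map_sub, map_smul, smul_eq_mul, h1, map_star_eq_conj hpos, add_re, sub_re,
    mul_re, ofReal_re, ofReal_im, conj_re, conj_im, one_re, one_im]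
  ring

end PositiveFunctional

theorem sqrt_two_re_sub_im_le_two_general
    {A : Type*} [NormedRing A] [StarRing A]
    [NormedAlgebra ℂ A] [StarModule ℂ A]
    (τ : A →ₗ[ℂ] ℂ)
    (hτ1 : τ 1 = 1)
    (hτpos : ∀ a : A, 0 ≤ τ (star a * a))
    (U V : A) (hU : U ∈ unitary A) (hV : V ∈ unitary A) :
    Real.sqrt 2 * (τ (star U * V)).re
      - (τ (U - (Real.sqrt 2 : ℂ) • V)).im ≤ 2 := by
  set a := U - (Real.sqrt 2 : ℂ) • V
  have hnorm : (τ (star a * a)).re = 3 - 2 * (Real.sqrt 2 * (τ (star U * V)).re) := by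
    rw [re_map_star_mul_self_sub_real_smul hτpos hτ1 hU hV, Real.sq_sqrt zero_le_two]
    ring
  have him : (τ a).im ^ 2 ≤ (τ (star a * a)).re :=
    calc (τ a).im ^ 2 = |(τ a).im| ^ 2 := (sq_abs _).symm
      _ ≤ ‖τ a‖ ^ 2 := pow_le_pow_left₀ (abs_nonneg _) (abs_im_le_norm _) 2
      _ ≤ (τ (star a * a)).re := sq_norm_map_le hτpos hτ1 a
  nlinarith [sq_nonneg ((τ a).im + 1)]

/-- Let `A` be a unital C*-algebra with tracial state `τ`. For unitaries `U, V`: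
`√2 * Re (τ (star U * V)) - Im (τ (U - √2 • V)) ≤ 2`. -/
theorem sqrt_two_re_sub_im_le_two
    {A : Type*} [NormedRing A] [StarRing A] [CStarRing A] [CompleteSpace A]
    [NormedAlgebra ℂ A] [StarModule ℂ A]
    (τ : A →ₗ[ℂ] ℂ)
    (hτ1 : τ 1 = 1)
    (hτtr : ∀ a b : A, τ (a * b) = τ (b * a))
    (hτpos : ∀ a : A, 0 ≤ τ (star a * a))
    (U V : A) (hU : U ∈ unitary A) (hV : V ∈ unitary A) :
    Real.sqrt 2 * (τ (star U * V)).re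
      - (τ (U - (Real.sqrt 2 : ℂ) • V)).im ≤ 2 :=
  sqrt_two_re_sub_im_le_two_general τ hτ1 hτpos U V hU hV
end

section
/- Let κ be an irrational real number and let n be a positive integer. Then there is no finite list S_1, S_2, …, S_k of n×n complex matrices, each self-adjoint and unitary, whose product S_1 · S_2 · ⋯ · S_k equals e^{2πiκ} times the identity matrix. -/
/-- For an irrational `κ`, no finite product of self-adjoint unitary complex
`n × n` matrices equals `e^{2πiκ}` times the identity. -/
theorem no_prod_selfAdjoint_unitaries_eq_exp_smul_one
    (κ : ℝ) (hκ : Irrational κ) (n : ℕ) (hn : 0 < n) :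
    ¬ ∃ L : List (Matrix (Fin n) (Fin n) ℂ),
        (∀ S ∈ L, S = star S ∧ star S * S = 1) ∧
        L.prod = Complex.exp (2 * Real.pi * Complex.I * κ) • (1 : Matrix (Fin n) (Fin n) ℂ) := by
  rintro ⟨L, hL, hprod⟩
  -- the determinant of the product squares to 1
  have key : ∀ M : List (Matrix (Fin n) (Fin n) ℂ),
      (∀ S ∈ M, S = star S ∧ star S * S = 1) → (M.prod.det) ^ 2 = 1 := by
    intro M hM
    induction M with
    | nil => simp
    | cons A T ih =>
      have hA := hM A (by simp)
      have hT : ∀ S ∈ T, S = star S ∧ star S * S = 1 := fun S hS => hM S (by simp [hS])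
      have hAA : A * A = 1 := by nth_rewrite 1 [hA.1]; exact hA.2
      have hAdet : A.det ^ 2 = 1 := by
        have := congrArg Matrix.det hAA
        simpa [Matrix.det_mul, sq] using this
      simp only [List.prod_cons, Matrix.det_mul, mul_pow, hAdet, ih hT, one_mul]
  have hd2 := key L hL
  have hdet := congrArg Matrix.det hprod
  rw [Matrix.det_smul, Matrix.det_one, Fintype.card_fin, mul_one] at hdet
  rw [hdet, ← pow_mul, ← Complex.exp_nat_mul] at hd2
  rw [Complex.exp_eq_one_iff] at hd2
  obtain ⟨k, hk⟩ := hd2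
  have hne : (2 * Real.pi * Complex.I : ℂ) ≠ 0 := by
    simp [Real.pi_ne_zero, Complex.I_ne_zero]
  have hcancel : ((n * 2 : ℕ) : ℂ) * κ = k := by
    have h2 : (2 * Real.pi * Complex.I) * (((n * 2 : ℕ) : ℂ) * κ)
        = (2 * Real.pi * Complex.I) * k := by
      push_cast at hk ⊢; linear_combination hk
    exact mul_left_cancel₀ hne h2
  have hreal : ((n * 2 : ℕ) : ℝ) * κ = k := by exact_mod_cast hcancel
  have hpos : ((n * 2 : ℕ) : ℝ) ≠ 0 := by positivity
  apply hκ
  refine ⟨(k : ℚ) / ((n * 2 : ℕ) : ℚ), ?_⟩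
  push_cast at hpos ⊢
  rw [div_eq_iff hpos]
  push_cast at hreal
  linarith [hreal]
end

section
/- Let κ be an irrational real number, let ι be a nonempty finite index type, and for each j ∈ ι let n_j be a positive integer. Consider the algebra A = Π_{j ∈ ι} M_{n_j}(ℂ) (the finite direct product of matrix algebras, with componentwise star). Then there is no finite list of elements of A, each self-adjoint and unitary, whose product equals e^{2πiκ} times the identity of A. -/
/-! Project onto one factor `M_{n_j}(ℂ)` and take determinants. A self-adjoint unitary squares
to `1`, so every factor of the product has determinant `±1` and the product has squared
determinant `1`; but `det (c • 1) = c ^ n_j`. Hence `e^{2πiκ}` would be a `2 n_j`-th root of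
unity, forcing `κ` to be rational. -/

theorem MonoidHom.map_list_prod_pow_eq_one {M N : Type*} [Monoid M] [CommMonoid N] (f : M →* N)
    {k : ℕ} {L : List M} (hL : ∀ x ∈ L, x ^ k = 1) : f L.prod ^ k = 1 := by
  induction L with
  | nil => simp
  | cons x L ih =>
    rw [List.prod_cons, map_mul, mul_pow, ← map_pow, hL x List.mem_cons_self, map_one, one_mul]
    exact ih fun y hy => hL y (List.mem_cons_of_mem x hy)

theorem sq_eq_one_of_eq_star_of_star_mul_self_eq_one {M : Type*} [Monoid M] [Star M]
    {S : M} (hS : S = star S) (hu : star S * S = 1) : S ^ 2 = 1 := by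
  rw [sq]
  rwa [← hS] at hu

theorem Irrational.exp_two_pi_I_mul_pow_ne_one {κ : ℝ} (hκ : Irrational κ) {m : ℕ} (hm : m ≠ 0) :
    Complex.exp (2 * Real.pi * Complex.I * κ) ^ m ≠ 1 := by
  rw [← Complex.exp_nat_mul, Ne, Complex.exp_eq_one_iff]
  rintro ⟨k, hk⟩
  have hmκ : ((m * κ : ℝ) : ℂ) = (k : ℝ) := by
    push_cast
    refine mul_right_cancel₀ Complex.two_pi_I_ne_zero ?_
    linear_combination hk
  exact (hκ.natCast_mul hm).ne_int k (Complex.ofReal_injective hmκ)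

theorem no_prod_selfAdjoint_unitaries_eq_exp_smul_one_pi_general
    (κ : ℝ) (hκ : Irrational κ)
    (ι : Type*) [Nonempty ι] (n : ι → ℕ) (hn : ∀ j, 0 < n j) :
    ¬ ∃ L : List (Π j, Matrix (Fin (n j)) (Fin (n j)) ℂ),
        (∀ S ∈ L, S = star S ∧ star S * S = 1) ∧
        L.prod = Complex.exp (2 * Real.pi * Complex.I * κ)
          • (1 : Π j, Matrix (Fin (n j)) (Fin (n j)) ℂ) := by
  rintro ⟨L, hL, hprod⟩
  obtain ⟨j⟩ := ‹Nonempty ι›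
  let detAt : (Π j, Matrix (Fin (n j)) (Fin (n j)) ℂ) →* ℂ :=
    Matrix.detMonoidHom.comp (Pi.evalMonoidHom _ j)
  have hdet_sq : detAt L.prod ^ 2 = 1 :=
    detAt.map_list_prod_pow_eq_one fun S hS =>
      sq_eq_one_of_eq_star_of_star_mul_self_eq_one (hL S hS).1 (hL S hS).2
  have hdet_prod : detAt L.prod = Complex.exp (2 * Real.pi * Complex.I * κ) ^ n j := by
    simp [detAt, hprod]
  rw [hdet_prod, ← pow_mul] at hdet_sq
  exact hκ.exp_two_pi_I_mul_pow_ne_one (Nat.mul_ne_zero (hn j).ne' two_ne_zero) hdet_sq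

/-- For an irrational `κ` and a finite direct product of matrix algebras
`A = Π j, M_{n j}(ℂ)`, no finite product of self-adjoint unitary elements of `A`
equals `e^{2πiκ}` times the identity of `A`. -/
theorem no_prod_selfAdjoint_unitaries_eq_exp_smul_one_pi
    (κ : ℝ) (hκ : Irrational κ)
    (ι : Type*) [Fintype ι] [Nonempty ι] (n : ι → ℕ) (hn : ∀ j, 0 < n j) :
    ¬ ∃ L : List (Π j, Matrix (Fin (n j)) (Fin (n j)) ℂ),
        (∀ S ∈ L, S = star S ∧ star S * S = 1) ∧
        L.prod = Complex.exp (2 * Real.pi * Complex.I * κ)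
          • (1 : Π j, Matrix (Fin (n j)) (Fin (n j)) ℂ) :=
  no_prod_selfAdjoint_unitaries_eq_exp_smul_one_pi_general κ hκ ι n hn
end

section
/- Let κ be an irrational real number and let n be a positive integer. Then there do not exist unitary matrices V_1, V_2, V_3, V_4 in M_n(ℂ) such that the four matrices star(V_1)·V_2, star(V_2)·V_3, star(V_3)·V_4, and e^{−2πiκ}·star(V_1)·V_4 are all self-adjoint. -/
/-- For an irrational `κ`, there are no unitary matrices `V₁, V₂, V₃, V₄` in
`M_n(ℂ)` such that `star V₁ * V₂`, `star V₂ * V₃`, `star V₃ * V₄`, and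
`e^{-2πiκ} • (star V₁ * V₄)` are all self-adjoint. -/
theorem no_unitaries_with_selfAdjoint_ratios
    (κ : ℝ) (hκ : Irrational κ) (n : ℕ) (hn : 0 < n) :
    ¬ ∃ V₁ V₂ V₃ V₄ : Matrix (Fin n) (Fin n) ℂ,
        V₁ ∈ unitary (Matrix (Fin n) (Fin n) ℂ) ∧
        V₂ ∈ unitary (Matrix (Fin n) (Fin n) ℂ) ∧
        V₃ ∈ unitary (Matrix (Fin n) (Fin n) ℂ) ∧
        V₄ ∈ unitary (Matrix (Fin n) (Fin n) ℂ) ∧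
        star V₁ * V₂ = star (star V₁ * V₂) ∧
        star V₂ * V₃ = star (star V₂ * V₃) ∧
        star V₃ * V₄ = star (star V₃ * V₄) ∧
        Complex.exp (-(2 * Real.pi * Complex.I * κ)) • (star V₁ * V₄)
          = star (Complex.exp (-(2 * Real.pi * Complex.I * κ)) • (star V₁ * V₄)) := by
  rintro ⟨V₁, V₂, V₃, V₄, h₁, h₂, h₃, h₄, hA, hB, hC, hD⟩
  set lam := Complex.exp (-(2 * Real.pi * Complex.I * κ)) with hlam
  -- product identity
  have prod : (star V₁ * V₂) * (star V₂ * V₃) * (star V₃ * V₄) = star V₁ * V₄ := by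
    simp only [mul_assoc]
    rw [← mul_assoc V₂, h₂.2, one_mul, ← mul_assoc V₃, h₃.2, one_mul]
  -- det of a self-adjoint matrix is real (fixed by conj)
  have real_det : ∀ M : Matrix (Fin n) (Fin n) ℂ, M = star M →
      starRingEnd ℂ M.det = M.det := by
    intro M hM
    conv_rhs => rw [hM]
    rw [Matrix.star_eq_conjTranspose, Matrix.det_conjTranspose]
    rfl
  have dA := real_det _ hA
  have dB := real_det _ hB
  have dC := real_det _ hC
  -- D := det (star V₁ * V₄) is real
  have hDdet : starRingEnd ℂ ((star V₁ * V₄).det) = (star V₁ * V₄).det := by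
    rw [← prod, Matrix.det_mul, Matrix.det_mul, map_mul, map_mul, dA, dB, dC]
  -- D ≠ 0
  have hDne : (star V₁ * V₄).det ≠ 0 := by
    have h1 : star (star V₁ * V₄) * (star V₁ * V₄) = 1 := by
      have := (Unitary.star_mem h₁ : star V₁ ∈ _)
      exact (mul_mem this h₄).1
    have := congrArg Matrix.det h1
    rw [Matrix.det_mul, Matrix.det_one] at this
    intro h; rw [h, mul_zero] at this; exact zero_ne_one this
  -- take det of the last hypothesis
  have hdet := congrArg Matrix.det hD
  have hsd : (star (star V₁ * V₄)).det = starRingEnd ℂ ((star V₁ * V₄).det) := by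
    rw [Matrix.star_eq_conjTranspose (star V₁ * V₄), Matrix.det_conjTranspose]
    rfl
  rw [star_smul, Matrix.det_smul, Matrix.det_smul, hsd, hDdet, Fintype.card_fin] at hdet
  have hpow : lam ^ n = (starRingEnd ℂ lam) ^ n := by
    have := mul_right_cancel₀ hDne hdet
    simpa using this
  have hstar : (starRingEnd ℂ) lam = Complex.exp (2 * Real.pi * Complex.I * κ) := by
    rw [hlam, ← Complex.exp_conj]
    congr 1
    simp only [map_neg, map_mul, Complex.conj_I, Complex.conj_ofReal, map_ofNat]
    ring
  rw [hstar, hlam, ← Complex.exp_nat_mul, ← Complex.exp_nat_mul,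
    Complex.exp_eq_exp_iff_exists_int] at hpow
  obtain ⟨k, hk⟩ := hpow
  -- derive a real linear relation
  have hI : (2 * Real.pi * Complex.I : ℂ) ≠ 0 := by
    simp [Complex.I_ne_zero, Real.pi_ne_zero]
  have hc : (κ * (2 * n) : ℂ) = (-k : ℂ) := by
    have h3 : (2 * Real.pi * Complex.I) * ((κ : ℂ) * (2 * n) + k) = 0 := by
      linear_combination -hk
    have h4 := (mul_eq_zero.mp h3).resolve_left hI
    linear_combination h4
  have hr : κ * (2 * n) = (-k : ℝ) := by
    exact_mod_cast hc
  have hn' : (2 * (n:ℝ)) ≠ 0 := by positivity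
  exact hκ ⟨(-k) / (2 * n), by push_cast; field_simp; linarith [hr]⟩
end
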